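/- arXiv:1703.07442 — 2 statements merged into one kernel-verified Lean document; each statement's English description precedes it below -/
import Mathlib

section
/- Let h, f₁, f₂ : R^n → R^n be functions and a₁, a₂ be nonzero reals such that h(a₁ v + a₂ w) = a₁ f₁(v) + a₂ f₂(w) for all v, w ∈ R^n, and suppose h is Lebesgue-measurable. Then there exist a matrix A ∈ R^{n×n} and vectors b, c ∈ R^n such that f₁(v) = A v + b and f₂(w) = A w + c for all v, w. -/
open MeasureTheory Pointwise

/-- A measurable additive map on `ℝⁿ` is continuous (Steinhaus-type argument). -/
lemma cont_of_measurable_addHom {n : ℕ} (g : (Fin n → ℝ) →+ (Fin n → ℝ))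
    (hg : Measurable g) : Continuous g := by
  apply continuous_of_continuousAt_zero g
  rw [ContinuousAt, map_zero, Metric.tendsto_nhds]
  intro ε hε
  obtain ⟨D, Dcount, Ddense⟩ := TopologicalSpace.exists_countable_dense (Fin n → ℝ)
  have hcover : (⋃ q ∈ D, g ⁻¹' Metric.ball q (ε / 3)) = Set.univ := by
    ext x
    simp only [Set.mem_iUnion, Set.mem_preimage, Set.mem_univ, iff_true]
    obtain ⟨q, hqD, hq⟩ := Ddense.exists_dist_lt (g x) (show (0:ℝ) < ε / 3 by positivity)
    exact ⟨q, hqD, Metric.mem_ball.2 (by simpa [dist_comm] using hq)⟩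
  -- some preimage has positive measure
  have : ∃ q ∈ D, 0 < volume (g ⁻¹' Metric.ball q (ε / 3)) := by
    by_contra hc
    push_neg at hc
    have h0 : volume (⋃ q ∈ D, g ⁻¹' Metric.ball q (ε / 3)) = 0 :=
      (measure_biUnion_null_iff Dcount).2 fun q hq => le_antisymm (hc q hq) bot_le
    rw [hcover] at h0
    exact (IsOpen.measure_pos volume isOpen_univ Set.univ_nonempty).ne' h0
  obtain ⟨q, _, hqpos⟩ := this
  set E := g ⁻¹' Metric.ball q (ε / 3) with hE
  have hEm : MeasurableSet E := hg measurableSet_ball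
  have hnhds : E - E ∈ nhds (0 : Fin n → ℝ) :=
    MeasureTheory.Measure.sub_mem_nhds_zero_of_addHaar_pos volume E hEm hqpos
  filter_upwards [hnhds] with x hx
  obtain ⟨u, hu, v, hv, rfl⟩ := hx
  have : g (u - v) = g u - g v := map_sub g u v
  rw [dist_zero_right, this]
  calc ‖g u - g v‖ = dist (g u) (g v) := (dist_eq_norm _ _).symm
    _ ≤ dist (g u) q + dist q (g v) := dist_triangle _ _ _
    _ < ε / 3 + ε / 3 := by
        exact add_lt_add (Metric.mem_ball.1 hu) (by rw [dist_comm]; exact Metric.mem_ball.1 hv)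
    _ < ε := by linarith

/-- If a measurable `h` of the sum `a₁ v + a₂ w` splits additively as
`a₁ f₁ v + a₂ f₂ w`, then `f₁, f₂` are affine with the same linear part. -/
theorem stmt_3 {n : ℕ} (h f₁ f₂ : (Fin n → ℝ) → (Fin n → ℝ)) (a₁ a₂ : ℝ)
    (ha₁ : a₁ ≠ 0) (ha₂ : a₂ ≠ 0) (hmeas : Measurable h)
    (heq : ∀ v w : Fin n → ℝ, h (a₁ • v + a₂ • w) = a₁ • f₁ v + a₂ • f₂ w) :
    ∃ (A : Matrix (Fin n) (Fin n) ℝ) (b c : Fin n → ℝ),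
      (∀ v, f₁ v = A.mulVec v + b) ∧ (∀ w, f₂ w = A.mulVec w + c) := by
  have key1 : ∀ v, a₁ • f₁ v = h (a₁ • v) - a₂ • f₂ 0 := by
    intro v
    have := heq v 0
    rw [smul_zero, add_zero] at this
    rw [this]; abel
  have key2 : ∀ w, a₂ • f₂ w = h (a₂ • w) - a₁ • f₁ 0 := by
    intro w
    have := heq 0 w
    rw [smul_zero, zero_add] at this
    rw [this]; abel
  have h0 : h 0 = a₁ • f₁ 0 + a₂ • f₂ 0 := by
    have := heq 0 0
    simpa using this
  have hadd : ∀ x y : Fin n → ℝ, h (x + y) = h x + h y - h 0 := by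
    intro x y
    have hx : a₁ • (a₁⁻¹ • x) = x := smul_inv_smul₀ ha₁ x
    have hy : a₂ • (a₂⁻¹ • y) = y := smul_inv_smul₀ ha₂ y
    have := heq (a₁⁻¹ • x) (a₂⁻¹ • y)
    rw [hx, hy] at this
    rw [this, key1 (a₁⁻¹ • x), key2 (a₂⁻¹ • y), hx, hy, h0]; abel
  -- the centered function is an additive monoid hom
  set g : (Fin n → ℝ) → (Fin n → ℝ) := fun x => h x - h 0 with hgdef
  have gadd : ∀ x y, g (x + y) = g x + g y := by
    intro x y
    simp only [hgdef, hadd x y]; abel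
  let G : (Fin n → ℝ) →+ (Fin n → ℝ) := AddMonoidHom.mk' g gadd
  have hGmeas : Measurable G := hmeas.sub measurable_const
  have hGcont : Continuous G := cont_of_measurable_addHom G hGmeas
  let L : (Fin n → ℝ) →L[ℝ] (Fin n → ℝ) := G.toRealLinearMap hGcont
  have hL : ∀ x, L x = h x - h 0 := fun x => rfl
  refine ⟨LinearMap.toMatrix' (L : (Fin n → ℝ) →ₗ[ℝ] (Fin n → ℝ)),
    a₁⁻¹ • (h 0 - a₂ • f₂ 0), a₂⁻¹ • (h 0 - a₁ • f₁ 0), ?_, ?_⟩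
  · intro v
    have hmv : (LinearMap.toMatrix' (L : (Fin n → ℝ) →ₗ[ℝ] (Fin n → ℝ))).mulVec v = L v := by
      rw [← Matrix.toLin'_apply, Matrix.toLin'_toMatrix']; rfl
    have : a₁ • f₁ v = a₁ • L v + (h 0 - a₂ • f₂ 0) := by
      rw [key1 v, ← L.map_smul, hL]; abel
    have := congrArg (fun z => a₁⁻¹ • z) this
    simp only [smul_add, inv_smul_smul₀ ha₁] at this
    rw [this, hmv]
  · intro w
    have hmv : (LinearMap.toMatrix' (L : (Fin n → ℝ) →ₗ[ℝ] (Fin n → ℝ))).mulVec w = L w := by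
      rw [← Matrix.toLin'_apply, Matrix.toLin'_toMatrix']; rfl
    have : a₂ • f₂ w = a₂ • L w + (h 0 - a₁ • f₁ 0) := by
      rw [key2 w, ← L.map_smul, hL]; abel
    have := congrArg (fun z => a₂⁻¹ • z) this
    simp only [smul_add, inv_smul_smul₀ ha₂] at this
    rw [this, hmv]
end

section
/- Let X₁, X₂ be independent square-integrable random vectors in R^n with the setup Y₁ = √γ X₁ + Z₁, Y₂ = √γ X₂ + Z₂ (Z₁, Z₂ standard Gaussian, all four mutually independent), α ∈ (0,1), and X = √(1−α) X₁ + √α X₂. Then E[X | √(1−α) Y₁ + √α Y₂] = E[X | Y₁, Y₂] almost surely if and only if E[ √(1−α) E[X₁|Y₁] + √α E[X₂|Y₂] | √(1−α) Y₁ + √α Y₂ ] = √(1−α) E[X₁|Y₁] + √α E[X₂|Y₂] almost surely. -/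
/-
Since `(X₁, Y₁)` and `(X₂, Y₂)` are independent, conditioning `X₁` on `(Y₁, Y₂)` is the same as
conditioning it on `Y₁` alone, and likewise for `X₂`; hence
`E[X | Y₁, Y₂] = √(1-α) E[X₁ | Y₁] + √α E[X₂ | Y₂]`. As `√(1-α) Y₁ + √α Y₂` is a function of
`(Y₁, Y₂)`, the tower property turns `E[X | √(1-α) Y₁ + √α Y₂]` into the conditional expectation
of that sum given `√(1-α) Y₁ + √α Y₂`, and the two conditions become the same statement.
-/

open MeasureTheory ProbabilityTheory

/-- The density of the standard Gaussian `N(0, I)` on `ℝⁿ`. -/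
noncomputable def stdGaussianPdf {n : ℕ} (z : EuclideanSpace ℝ (Fin n)) : ℝ :=
  (Real.sqrt ((2 * Real.pi) ^ n))⁻¹ * Real.exp (-(1 / 2) * ‖z‖ ^ 2)

open MeasurableSpace Set

section Generation

variable {Ω : Type*}

theorem IsPiSystem.image2_inter {C D : Set (Set Ω)} (hC : IsPiSystem C) (hD : IsPiSystem D) :
    IsPiSystem (image2 (· ∩ ·) C D) := by
  rintro _ ⟨A, hA, B, hB, rfl⟩ _ ⟨A', hA', B', hB', rfl⟩ hne
  rw [inter_inter_inter_comm] at hne ⊢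
  exact mem_image2_of_mem (hC A hA A' hA' hne.left) (hD B hB B' hB' hne.right)

theorem sup_eq_generateFrom_image2_inter (m₁ m₂ : MeasurableSpace Ω) :
    m₁ ⊔ m₂ =
      generateFrom (image2 (· ∩ ·) {s | MeasurableSet[m₁] s} {t | MeasurableSet[m₂] t}) := by
  refine le_antisymm (sup_le (fun s hs => ?_) (fun s hs => ?_)) (generateFrom_le ?_)
  · exact measurableSet_generateFrom ⟨s, hs, univ, MeasurableSet.univ, inter_univ s⟩
  · exact measurableSet_generateFrom ⟨univ, MeasurableSet.univ, s, hs, univ_inter s⟩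
  · rintro _ ⟨A, hA, B, hB, rfl⟩
    exact (le_sup_left (b := m₂) _ hA).inter (le_sup_right (a := m₁) _ hB)

end Generation

section CondExp

variable {Ω E : Type*} [NormedAddCommGroup E] [NormedSpace ℝ E] {m0 : MeasurableSpace Ω}
  {μ : Measure Ω}

theorem setIntegral_eq_setIntegral_of_isPiSystem {m : MeasurableSpace Ω} (hm : m ≤ m0)
    {S : Set (Set Ω)} (h_eq : m = generateFrom S) (h_pi : IsPiSystem S) (h_univ : univ ∈ S)
    {f g : Ω → E} (hf : Integrable f μ) (hg : Integrable g μ)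
    (basic : ∀ t ∈ S, ∫ x in t, f x ∂μ = ∫ x in t, g x ∂μ) {t : Set Ω}
    (ht : MeasurableSet[m] t) : ∫ x in t, f x ∂μ = ∫ x in t, g x ∂μ := by
  have h_total : ∫ x, f x ∂μ = ∫ x, g x ∂μ := by
    simpa only [Measure.restrict_univ] using basic univ h_univ
  induction t, ht using MeasurableSpace.induction_on_inter h_eq h_pi with
  | empty => simp
  | basic t ht => exact basic t ht
  | compl t ht ih =>
    rw [setIntegral_compl (hm t ht) hf, setIntegral_compl (hm t ht) hg, h_total, ih]
  | iUnion t hdisj ht ih =>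
    rw [integral_iUnion (fun i => hm _ (ht i)) hdisj hf.integrableOn,
      integral_iUnion (fun i => hm _ (ht i)) hdisj hg.integrableOn]
    exact tsum_congr ih

variable [CompleteSpace E] [IsFiniteMeasure μ]

theorem setIntegral_inter_eq_measureReal_smul_of_indep {m₁ m₂ : MeasurableSpace Ω}
    (hm₁ : m₁ ≤ m0) (hm₂ : m₂ ≤ m0) (hindep : Indep m₁ m₂ μ) {g : Ω → E}
    (hgm : StronglyMeasurable[m₁] g) (hg : Integrable g μ) {A B : Set Ω}
    (hA : MeasurableSet[m₁] A) (hB : MeasurableSet[m₂] B) :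
    ∫ x in A ∩ B, g x ∂μ = μ.real B • ∫ x in A, g x ∂μ := by
  have hcond : μ[A.indicator g | m₂] =ᵐ[μ] fun _ => ∫ x, A.indicator g x ∂μ :=
    condExp_indep_eq hm₁ hm₂ (hgm.indicator hA) hindep
  calc ∫ x in A ∩ B, g x ∂μ = ∫ x in B, A.indicator g x ∂μ := by
        rw [setIntegral_indicator (hm₁ _ hA), inter_comm]
    _ = ∫ x in B, (μ[A.indicator g | m₂]) x ∂μ :=
        (setIntegral_condExp hm₂ (hg.indicator (hm₁ _ hA)) hB).symm
    _ = ∫ _ in B, (∫ x, A.indicator g x ∂μ) ∂μ := integral_congr_ae (ae_restrict_of_ae hcond)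
    _ = μ.real B • ∫ x in A, g x ∂μ := by rw [setIntegral_const, integral_indicator (hm₁ _ hA)]

theorem condExp_sup_ae_eq_of_indep {m₁ m₂ mb : MeasurableSpace Ω} (hm₁b : m₁ ≤ mb)
    (hb : mb ≤ m0) (hm₂ : m₂ ≤ m0) (hindep : Indep mb m₂ μ) {f : Ω → E}
    (hf : Integrable f μ) (hfm : StronglyMeasurable[mb] f) :
    μ[f | m₁ ⊔ m₂] =ᵐ[μ] μ[f | m₁] := by
  have hm₁ : m₁ ≤ m0 := hm₁b.trans hb
  have hsup : m₁ ⊔ m₂ ≤ m0 := sup_le hm₁ hm₂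
  have hcond_meas : StronglyMeasurable[mb] (μ[f | m₁]) := stronglyMeasurable_condExp.mono hm₁b
  -- on `A ∩ B` both sides split off the factor `μ B`, and on `A` they agree
  have h_rect : ∀ t ∈ image2 (· ∩ ·) {s | MeasurableSet[m₁] s} {t | MeasurableSet[m₂] t},
      ∫ x in t, (μ[f | m₁]) x ∂μ = ∫ x in t, f x ∂μ := by
    rintro _ ⟨A, hA, B, hB, rfl⟩
    rw [setIntegral_inter_eq_measureReal_smul_of_indep hb hm₂ hindep hfm hf (hm₁b _ hA) hB,
      setIntegral_inter_eq_measureReal_smul_of_indep hb hm₂ hindep hcond_meas integrable_condExp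
        (hm₁b _ hA) hB, setIntegral_condExp hm₁ hf hA]
  refine (ae_eq_condExp_of_forall_setIntegral_eq hsup hf
    (fun _ _ _ => integrable_condExp.integrableOn) (fun t ht _ => ?_)
    (stronglyMeasurable_condExp.mono (le_sup_left : m₁ ≤ m₁ ⊔ m₂)).aestronglyMeasurable).symm
  exact setIntegral_eq_setIntegral_of_isPiSystem hsup (sup_eq_generateFrom_image2_inter m₁ m₂)
    ((@isPiSystem_measurableSet Ω m₁).image2_inter (@isPiSystem_measurableSet Ω m₂))
    ⟨univ, MeasurableSet.univ, univ, MeasurableSet.univ, inter_univ univ⟩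
    integrable_condExp hf h_rect ht

theorem condExp_ae_eq_condExp_iff_of_le {m m' : MeasurableSpace Ω} (hm : m ≤ m')
    (hm' : m' ≤ m0) {f W : Ω → E} (hW : μ[f | m'] =ᵐ[μ] W) :
    μ[f | m] =ᵐ[μ] μ[f | m'] ↔ μ[W | m] =ᵐ[μ] W := by
  have htower : μ[f | m] =ᵐ[μ] μ[W | m] :=
    (condExp_condExp_of_le hm hm').symm.trans (condExp_congr_ae hW)
  exact ⟨fun h => htower.symm.trans (h.trans hW), fun h => htower.trans (h.trans hW.symm)⟩

end CondExp

section RandomVariables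

variable {Ω E β β' : Type*} [NormedAddCommGroup E] [NormedSpace ℝ E] [CompleteSpace E]
  [MeasurableSpace E] [BorelSpace E] [SecondCountableTopology E]
  [mβ : MeasurableSpace β] [mβ' : MeasurableSpace β'] {m0 : MeasurableSpace Ω} {μ : Measure Ω}
  [IsFiniteMeasure μ]

theorem condExp_comap_sup_ae_eq_of_indepFun {X : Ω → E} {Y : Ω → β} {Y' : Ω → β'}
    (hX : Measurable X) (hY : Measurable Y) (hY' : Measurable Y')
    (hindep : IndepFun (fun ω => (X ω, Y ω)) Y' μ) (hXi : Integrable X μ) :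
    μ[X | mβ.comap Y ⊔ mβ'.comap Y'] =ᵐ[μ] μ[X | mβ.comap Y] := by
  have hXY := comap_measurable (m := (‹MeasurableSpace E›.prod mβ)) fun ω => (X ω, Y ω)
  refine condExp_sup_ae_eq_of_indep ?_ (hX.prodMk hY).comap_le hY'.comap_le hindep hXi
    hXY.fst.stronglyMeasurable
  exact hXY.snd.comap_le

theorem condExp_smul_add_smul_ae_eq_of_indepFun {X₁ X₂ : Ω → E} {Y₁ : Ω → β} {Y₂ : Ω → β'}
    (hX₁ : Measurable X₁) (hX₂ : Measurable X₂) (hY₁ : Measurable Y₁) (hY₂ : Measurable Y₂)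
    (hindep : IndepFun (fun ω => (X₁ ω, Y₁ ω)) (fun ω => (X₂ ω, Y₂ ω)) μ)
    (hX₁i : Integrable X₁ μ) (hX₂i : Integrable X₂ μ) (a b : ℝ) :
    μ[fun ω => a • X₁ ω + b • X₂ ω | (mβ.prod mβ').comap (fun ω => (Y₁ ω, Y₂ ω))]
      =ᵐ[μ] fun ω => a • (μ[X₁ | mβ.comap Y₁]) ω + b • (μ[X₂ | mβ'.comap Y₂]) ω := by
  have h₁ : μ[X₁ | mβ.comap Y₁ ⊔ mβ'.comap Y₂] =ᵐ[μ] μ[X₁ | mβ.comap Y₁] :=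
    condExp_comap_sup_ae_eq_of_indepFun hX₁ hY₁ hY₂ (hindep.comp measurable_id measurable_snd)
      hX₁i
  have h₂ : μ[X₂ | mβ.comap Y₁ ⊔ mβ'.comap Y₂] =ᵐ[μ] μ[X₂ | mβ'.comap Y₂] := by
    rw [sup_comm]
    exact condExp_comap_sup_ae_eq_of_indepFun hX₂ hY₂ hY₁
      (hindep.symm.comp measurable_id measurable_snd) hX₂i
  rw [comap_prodMk]
  calc μ[fun ω => a • X₁ ω + b • X₂ ω | mβ.comap Y₁ ⊔ mβ'.comap Y₂]
      =ᵐ[μ] a • μ[X₁ | mβ.comap Y₁ ⊔ mβ'.comap Y₂]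
          + b • μ[X₂ | mβ.comap Y₁ ⊔ mβ'.comap Y₂] :=
        (condExp_add (hX₁i.smul a) (hX₂i.smul b) _).trans
          ((condExp_smul a X₁ _).add (condExp_smul b X₂ _))
    _ =ᵐ[μ] _ := by
        filter_upwards [h₁, h₂] with ω hω₁ hω₂
        simp only [Pi.add_apply, Pi.smul_apply, hω₁, hω₂]

end RandomVariables

theorem stmt_16_general {Ω : Type*} [MeasureSpace Ω] [IsProbabilityMeasure (ℙ : Measure Ω)]
    {n : ℕ} (X₁ X₂ Z₁ Z₂ Y₁ Y₂ X : Ω → EuclideanSpace ℝ (Fin n))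
    (hX₁meas : Measurable X₁) (hX₂meas : Measurable X₂)
    (hZ₁meas : Measurable Z₁) (hZ₂meas : Measurable Z₂)
    (hX₁L2 : MemLp X₁ 2 (ℙ : Measure Ω)) (hX₂L2 : MemLp X₂ 2 (ℙ : Measure Ω))
    (hindep : iIndepFun ![X₁, X₂, Z₁, Z₂] (ℙ : Measure Ω))
    (γ : ℝ) (α : ℝ)
    (hY₁ : Y₁ = fun ω => Real.sqrt γ • X₁ ω + Z₁ ω)
    (hY₂ : Y₂ = fun ω => Real.sqrt γ • X₂ ω + Z₂ ω)
    (hX : X = fun ω => Real.sqrt (1 - α) • X₁ ω + Real.sqrt α • X₂ ω) :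
    ((ℙ : Measure Ω)[X | MeasurableSpace.comap
          (fun ω => Real.sqrt (1 - α) • Y₁ ω + Real.sqrt α • Y₂ ω) inferInstance]
        =ᵐ[(ℙ : Measure Ω)]
      (ℙ : Measure Ω)[X | MeasurableSpace.comap (fun ω => (Y₁ ω, Y₂ ω)) inferInstance])
    ↔
    ((ℙ : Measure Ω)[(fun ω =>
          Real.sqrt (1 - α) • ((ℙ : Measure Ω)[X₁ |
              MeasurableSpace.comap Y₁ inferInstance]) ω
            + Real.sqrt α • ((ℙ : Measure Ω)[X₂ |
              MeasurableSpace.comap Y₂ inferInstance]) ω)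
        | MeasurableSpace.comap
            (fun ω => Real.sqrt (1 - α) • Y₁ ω + Real.sqrt α • Y₂ ω) inferInstance]
      =ᵐ[(ℙ : Measure Ω)]
      (fun ω => Real.sqrt (1 - α) • ((ℙ : Measure Ω)[X₁ |
            MeasurableSpace.comap Y₁ inferInstance]) ω
          + Real.sqrt α • ((ℙ : Measure Ω)[X₂ |
            MeasurableSpace.comap Y₂ inferInstance]) ω)) := by
  subst hY₁ hY₂ hX
  have hY₁meas : Measurable fun ω => Real.sqrt γ • X₁ ω + Z₁ ω :=
    (hX₁meas.const_smul (Real.sqrt γ)).add hZ₁meas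
  have hY₂meas : Measurable fun ω => Real.sqrt γ • X₂ ω + Z₂ ω :=
    (hX₂meas.const_smul (Real.sqrt γ)).add hZ₂meas
  have hXZ : IndepFun (fun ω => (X₁ ω, Z₁ ω)) (fun ω => (X₂ ω, Z₂ ω)) ℙ := by
    simpa using hindep.indepFun_prodMk_prodMk (fun i => by fin_cases i <;> assumption) 0 2 1 3
      (by decide) (by decide) (by decide) (by decide)
  have hpair : Measurable fun p : EuclideanSpace ℝ (Fin n) × EuclideanSpace ℝ (Fin n) =>
      (p.1, Real.sqrt γ • p.1 + p.2) :=
    measurable_fst.prodMk ((measurable_fst.const_smul (Real.sqrt γ)).add measurable_snd)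
  have hdecomp := condExp_smul_add_smul_ae_eq_of_indepFun hX₁meas hX₂meas hY₁meas hY₂meas
    (hXZ.comp hpair hpair) (hX₁L2.integrable one_le_two) (hX₂L2.integrable one_le_two)
    (Real.sqrt (1 - α)) (Real.sqrt α)
  have hsum : Measurable fun p : EuclideanSpace ℝ (Fin n) × EuclideanSpace ℝ (Fin n) =>
      Real.sqrt (1 - α) • p.1 + Real.sqrt α • p.2 :=
    (measurable_fst.const_smul (Real.sqrt (1 - α))).add (measurable_snd.const_smul (Real.sqrt α))
  exact condExp_ae_eq_condExp_iff_of_le (hsum.comp (comap_measurable _)).comap_le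
    (hY₁meas.prodMk hY₂meas).comap_le hdecomp

/-- **Equivalence of conditions (7b) and (7c) in Theorem 2.** -/
theorem stmt_16 {Ω : Type*} [MeasureSpace Ω] [IsProbabilityMeasure (ℙ : Measure Ω)]
    {n : ℕ} (X₁ X₂ Z₁ Z₂ Y₁ Y₂ X : Ω → EuclideanSpace ℝ (Fin n))
    (hX₁meas : Measurable X₁) (hX₂meas : Measurable X₂)
    (hZ₁meas : Measurable Z₁) (hZ₂meas : Measurable Z₂)
    (hX₁L2 : MemLp X₁ 2 (ℙ : Measure Ω)) (hX₂L2 : MemLp X₂ 2 (ℙ : Measure Ω))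
    (hZ₁ : Measure.map Z₁ (ℙ : Measure Ω)
      = volume.withDensity (fun z => ENNReal.ofReal (stdGaussianPdf z)))
    (hZ₂ : Measure.map Z₂ (ℙ : Measure Ω)
      = volume.withDensity (fun z => ENNReal.ofReal (stdGaussianPdf z)))
    (hindep : iIndepFun ![X₁, X₂, Z₁, Z₂] (ℙ : Measure Ω))
    (γ : ℝ) (hγ : 0 < γ) (α : ℝ) (hα : α ∈ Set.Ioo (0 : ℝ) 1)
    (hY₁ : Y₁ = fun ω => Real.sqrt γ • X₁ ω + Z₁ ω)
    (hY₂ : Y₂ = fun ω => Real.sqrt γ • X₂ ω + Z₂ ω)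
    (hX : X = fun ω => Real.sqrt (1 - α) • X₁ ω + Real.sqrt α • X₂ ω) :
    ((ℙ : Measure Ω)[X | MeasurableSpace.comap
          (fun ω => Real.sqrt (1 - α) • Y₁ ω + Real.sqrt α • Y₂ ω) inferInstance]
        =ᵐ[(ℙ : Measure Ω)]
      (ℙ : Measure Ω)[X | MeasurableSpace.comap (fun ω => (Y₁ ω, Y₂ ω)) inferInstance])
    ↔
    ((ℙ : Measure Ω)[(fun ω =>
          Real.sqrt (1 - α) • ((ℙ : Measure Ω)[X₁ |
              MeasurableSpace.comap Y₁ inferInstance]) ω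
            + Real.sqrt α • ((ℙ : Measure Ω)[X₂ |
              MeasurableSpace.comap Y₂ inferInstance]) ω)
        | MeasurableSpace.comap
            (fun ω => Real.sqrt (1 - α) • Y₁ ω + Real.sqrt α • Y₂ ω) inferInstance]
      =ᵐ[(ℙ : Measure Ω)]
      (fun ω => Real.sqrt (1 - α) • ((ℙ : Measure Ω)[X₁ |
            MeasurableSpace.comap Y₁ inferInstance]) ω
          + Real.sqrt α • ((ℙ : Measure Ω)[X₂ |
            MeasurableSpace.comap Y₂ inferInstance]) ω)) :=
  stmt_16_general X₁ X₂ Z₁ Z₂ Y₁ Y₂ X hX₁meas hX₂meas hZ₁meas hZ₂meas hX₁L2 hX₂L2 hindep γ α hY₁ hY₂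
    hX
end
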